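/- (Game-theoretic Fatou's Lemma) Let (f_n) be a sequence of extended real variables on the path space Ω that is uniformly bounded below, and let f := liminf_n f_n (pointwise). If E_V(f) < +∞, then E_V(f) ≤ liminf_n E_V(f_n). -/

import Mathlib

open Filter

/-- prefix of length `n` of a path -/
def pref {X : Type*} (ω : ℕ → X) (n : ℕ) : List X := (List.range n).map ω

/-- process difference -/
def pdiff {X : Type*} (M : List X → ℝ) (s : List X) : X → ℝ := fun x => M (s ++ [x]) - M s

/-- process multiplier -/
noncomputable def pmul {X : Type*} (M : List X → ℝ) (s : List X) : X → ℝ :=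
  fun x => M (s ++ [x]) / M s

/-- family of coherent upper expectations (local models of an imprecise probability tree) -/
def Coherent {X : Type*} (Q : List X → (X → ℝ) → ℝ) : Prop :=
  ∀ s : List X,
    (∀ h : X → ℝ, Q s h ≤ ⨆ x, h x) ∧
    (∀ h g : X → ℝ, Q s (h + g) ≤ Q s h + Q s g) ∧
    (∀ (h : X → ℝ) (c : ℝ), 0 ≤ c → Q s (c • h) = c * Q s h)

/-- supermartingale for the tree with local models `Q` -/
def IsSupermart {X : Type*} (Q : List X → (X → ℝ) → ℝ) (M : List X → ℝ) : Prop :=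
  ∀ s : List X, Q s (pdiff M s) ≤ 0

/-- bounded below process -/
def BddBelowProc {X : Type*} (M : List X → ℝ) : Prop := ∃ C : ℝ, ∀ s : List X, C ≤ M s

/-- test supermartingale: nonnegative supermartingale with initial value 1 -/
def IsTestSupermart {X : Type*} (Q : List X → (X → ℝ) → ℝ) (M : List X → ℝ) : Prop :=
  IsSupermart Q M ∧ (∀ s : List X, 0 ≤ M s) ∧ M [] = 1

/-- game-theoretic upper expectation conditional on a situation `s` -/
noncomputable def EV {X : Type*} (Q : List X → (X → ℝ) → ℝ) (f : (ℕ → X) → EReal)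
    (s : List X) : EReal :=
  sInf { y : EReal | ∃ M : List X → ℝ, IsSupermart Q M ∧ BddBelowProc M ∧
    (∀ ω : ℕ → X, pref ω s.length = s →
      f ω ≤ Filter.liminf (fun n => ((M (pref ω n) : ℝ) : EReal)) Filter.atTop) ∧
    y = ((M s : ℝ) : EReal) }

/-!
Write `f = ⨆ k, g k` with `g k = ⨅ n ≥ k, F n`, an increasing sequence bounded below, so that
Fatou's lemma follows from upward convergence `EV (⨆ k, g k) ≤ ⨆ k, EV (g k)`.

For upward convergence, the conditional upper expectations `V k s = EV (g k | s)` are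
supermartingales increasing in `k`, hence so is their limit `S`, and `S □ = lim EV (g k)`.
`S` dominates `⨆ k, g k` along every path on which `liminf V k ≥ g k` for all `k`. Off these
paths some `liminf V k < a < b < g k` with `a, b` rational, and the relay strategy that buys a
near-optimal supermartingale for `g k` whenever `V k < a` and sells it once it exceeds `b`
multiplies its capital by a fixed factor infinitely often. A weighted countable sum `J` of
these test supermartingales makes `S + ε J` dominate `⨆ k, g k` on all paths, whence
`EV (⨆ k, g k) ≤ S □ + ε`.
-/

open Topology

section

variable {X : Type*} {Q : List X → (X → ℝ) → ℝ}

namespace Coherent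

lemma le_of_forall_le [Nonempty X] (hQ : Coherent Q) (s : List X) {h : X → ℝ} {c : ℝ}
    (hc : ∀ x, h x ≤ c) : Q s h ≤ c :=
  ((hQ s).1 h).trans (ciSup_le hc)

lemma apply_zero (hQ : Coherent Q) (s : List X) : Q s 0 = 0 := by
  simpa using (hQ s).2.2 0 0 le_rfl

lemma apply_add_apply_neg_nonneg (hQ : Coherent Q) (s : List X) (h : X → ℝ) :
    0 ≤ Q s h + Q s (-h) := by
  simpa [hQ.apply_zero] using (hQ s).2.1 h (-h)

lemma exists_le_apply [Finite X] [Nonempty X] (hQ : Coherent Q) (s : List X) (h : X → ℝ) :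
    ∃ x, h x ≤ Q s h := by
  obtain ⟨x₀, hx₀⟩ := Finite.exists_min h
  have := hQ.le_of_forall_le s (h := -h) (c := -h x₀) fun x => by simpa using hx₀ x
  exact ⟨x₀, by linarith [hQ.apply_add_apply_neg_nonneg s h]⟩

lemma apply_const [Nonempty X] (hQ : Coherent Q) (s : List X) (c : ℝ) :
    Q s (fun _ => c) = c := by
  have hup : Q s (fun _ => c) ≤ c := hQ.le_of_forall_le s fun _ => le_rfl
  have hneg : Q s (-fun _ => c) ≤ -c := hQ.le_of_forall_le s fun _ => le_rfl
  exact le_antisymm hup (by linarith [hQ.apply_add_apply_neg_nonneg s fun _ => c])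

lemma mono [Nonempty X] (hQ : Coherent Q) (s : List X) {h g : X → ℝ}
    (hle : ∀ x, h x ≤ g x) : Q s h ≤ Q s g := by
  have := (hQ s).2.1 g (h - g)
  rw [add_sub_cancel] at this
  linarith [hQ.le_of_forall_le s (h := h - g) (c := 0) fun x => by simpa using hle x]

lemma apply_add_const [Nonempty X] (hQ : Coherent Q) (s : List X) (h : X → ℝ) (c : ℝ) :
    Q s (fun x => h x + c) = Q s h + c := by
  have hup := (hQ s).2.1 h fun _ => c
  have hdown := (hQ s).2.1 (fun x => h x + c) fun _ => -c
  simp only [Pi.add_def, add_neg_cancel_right, hQ.apply_const] at hup hdown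
  linarith

lemma apply_le_apply_add [Nonempty X] (hQ : Coherent Q) (s : List X) {h g : X → ℝ} {c : ℝ}
    (hle : ∀ x, h x ≤ g x + c) : Q s h ≤ Q s g + c :=
  (hQ.mono s hle).trans_eq (hQ.apply_add_const s g c)

lemma apply_const_mul (hQ : Coherent Q) (s : List X) (h : X → ℝ) {c : ℝ} (hc : 0 ≤ c) :
    Q s (fun x => c * h x) = c * Q s h :=
  (hQ s).2.2 h c hc

end Coherent

namespace IsSupermart

lemma const (hQ : Coherent Q) (c : ℝ) : IsSupermart Q fun _ => c := fun s => by
  have hdiff : pdiff (fun _ => c) s = 0 := by funext x; simp [pdiff]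
  rw [hdiff, hQ.apply_zero]

lemma add (hQ : Coherent Q) {M N : List X → ℝ} (hM : IsSupermart Q M)
    (hN : IsSupermart Q N) : IsSupermart Q (M + N) := fun s => by
  have hsplit : pdiff (M + N) s = pdiff M s + pdiff N s := by
    funext x; simp only [pdiff, Pi.add_apply]; ring
  rw [hsplit]
  linarith [(hQ s).2.1 (pdiff M s) (pdiff N s), hM s, hN s]

lemma const_mul (hQ : Coherent Q) {M : List X → ℝ} (hM : IsSupermart Q M) {c : ℝ}
    (hc : 0 ≤ c) : IsSupermart Q fun s => c * M s := fun s => by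
  have hscale : pdiff (fun s => c * M s) s = fun x => c * pdiff M s x := by
    funext x; simp only [pdiff]; ring
  rw [hscale, hQ.apply_const_mul s _ hc]
  exact mul_nonpos_of_nonneg_of_nonpos hc (hM s)

lemma sum (hQ : Coherent Q) {ι : Type*} (t : Finset ι) {M : ι → List X → ℝ}
    (hM : ∀ i, IsSupermart Q (M i)) : IsSupermart Q fun s => ∑ i ∈ t, M i s := by
  classical
  induction t using Finset.induction_on with
  | empty => simpa using const hQ 0
  | insert a t ha ih =>
    simp only [Finset.sum_insert ha]
    exact (hM a).add hQ ih

lemma of_tendsto [Finite X] [Nonempty X] (hQ : Coherent Q) {M : ℕ → List X → ℝ}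
    {L : List X → ℝ} (hM : ∀ j, IsSupermart Q (M j))
    (hL : ∀ s, Tendsto (fun j => M j s) atTop (𝓝 (L s))) : IsSupermart Q L := by
  intro s
  refine le_of_forall_pos_le_add fun ε hε => ?_
  have hchildren : ∀ᶠ j in atTop, ∀ x, L (s ++ [x]) - ε / 2 < M j (s ++ [x]) :=
    eventually_all.2 fun x => (hL _).eventually (lt_mem_nhds (by linarith))
  have hnode : ∀ᶠ j in atTop, M j s < L s + ε / 2 :=
    (hL s).eventually (gt_mem_nhds (by linarith))
  obtain ⟨j, hj, hjs⟩ := (hchildren.and hnode).exists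
  have := hQ.apply_le_apply_add s (h := pdiff L s) (g := pdiff (M j) s) (c := ε) fun x => by
    simp only [pdiff]; linarith [hj x]
  linarith [hM j s]

end IsSupermart

lemma pref_zero (ω : ℕ → X) : pref ω 0 = [] := rfl

lemma length_pref (ω : ℕ → X) (n : ℕ) : (pref ω n).length = n := by simp [pref]

lemma pref_succ (ω : ℕ → X) (n : ℕ) : pref ω (n + 1) = pref ω n ++ [ω n] := by
  simp [pref, List.range_succ]

lemma pref_prefix_pref (ω : ℕ → X) {m n : ℕ} (h : m ≤ n) : pref ω m <+: pref ω n := by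
  induction n, h using Nat.le_induction with
  | base => exact List.prefix_refl _
  | succ n _ ih => exact ih.trans (pref_succ ω n ▸ List.prefix_append _ _)

lemma pref_length_eq_of_prefix {ω : ℕ → X} {t : List X} {n : ℕ} (h : t <+: pref ω n) :
    pref ω t.length = t := by
  have hlen : t.length ≤ n := by simpa [length_pref] using h.length_le
  exact (List.prefix_of_prefix_length_le (pref_prefix_pref ω hlen) h
    (by simp [length_pref])).eq_of_length (length_pref ω _)

lemma IsSupermart.exists_child_le [Finite X] [Nonempty X] (hQ : Coherent Q) {M : List X → ℝ}
    (hM : IsSupermart Q M) (s : List X) : ∃ x, M (s ++ [x]) ≤ M s := by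
  obtain ⟨x, hx⟩ := hQ.exists_le_apply s (pdiff M s)
  exact ⟨x, by linarith [hM s, show pdiff M s x = M (s ++ [x]) - M s from rfl]⟩

lemma IsSupermart.exists_path_le [Finite X] [Nonempty X] (hQ : Coherent Q) {M : List X → ℝ}
    (hM : IsSupermart Q M) (t : List X) :
    ∃ ω : ℕ → X, pref ω t.length = t ∧ ∀ n, t.length ≤ n → M (pref ω n) ≤ M t := by
  choose next hnext using hM.exists_child_le hQ
  let chain : ℕ → List X := fun k => Nat.rec t (fun _ c => c ++ [next c]) k
  have chain_succ (k : ℕ) : chain (k + 1) = chain k ++ [next (chain k)] := rfl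
  have chain_le (k : ℕ) : M (chain k) ≤ M t := by
    induction k with
    | zero => exact le_rfl
    | succ k ih => exact (chain_succ k ▸ hnext (chain k)).trans ih
  let ω : ℕ → X := fun n => if h : n < t.length then t[n] else next (chain (n - t.length))
  have pref_chain (k : ℕ) : pref ω (t.length + k) = chain k := by
    induction k with
    | zero =>
      refine List.ext_getElem (length_pref ω _) fun i hi _ => ?_
      have hit : i < t.length := by simpa [length_pref] using hi
      simp [pref, ω, hit, chain]
    | succ k ih =>
      rw [← add_assoc, pref_succ, ih, chain_succ]
      simp [ω]
  refine ⟨ω, pref_chain 0, fun n hn => ?_⟩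
  obtain ⟨k, rfl⟩ := Nat.exists_eq_add_of_le hn
  exact pref_chain k ▸ chain_le k

section PathLiminf

noncomputable def pathLiminf (M : List X → ℝ) (ω : ℕ → X) : EReal :=
  liminf (fun n => (M (pref ω n) : EReal)) atTop

def DominatesAt (M : List X → ℝ) (g : (ℕ → X) → EReal) (s : List X) : Prop :=
  ∀ ω, pref ω s.length = s → g ω ≤ pathLiminf M ω

variable {M N : List X → ℝ} {ω : ℕ → X}

lemma pathLiminf_mono (h : ∀ s, M s ≤ N s) (ω : ℕ → X) : pathLiminf M ω ≤ pathLiminf N ω :=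
  liminf_le_liminf (Eventually.of_forall fun n => EReal.coe_le_coe_iff.2 (h _))

lemma le_pathLiminf {c : ℝ} (h : ∀ s, c ≤ M s) (ω : ℕ → X) : (c : EReal) ≤ pathLiminf M ω :=
  le_liminf_of_le (by isBoundedDefault) (Eventually.of_forall fun n => EReal.coe_le_coe_iff.2 (h _))

lemma pathLiminf_le_of_forall_le {N₀ : ℕ} {c : ℝ} (h : ∀ n, N₀ ≤ n → M (pref ω n) ≤ c) :
    pathLiminf M ω ≤ c :=
  liminf_le_of_frequently_le' <| Eventually.frequently <|
    eventually_atTop.2 ⟨N₀, fun n hn => EReal.coe_le_coe_iff.2 (h n hn)⟩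

lemma pathLiminf_eq_top (h : Tendsto (fun n => M (pref ω n)) atTop atTop) :
    pathLiminf M ω = ⊤ :=
  (EReal.tendsto_coe_atTop.comp h).liminf_eq

lemma DominatesAt.of_prefix {g : (ℕ → X) → EReal} {s t : List X} (h : DominatesAt M g s)
    (hst : s <+: t) : DominatesAt M g t := fun ω hω =>
  h ω (pref_length_eq_of_prefix (n := t.length) (by rwa [hω]))

end PathLiminf

lemma IsSupermart.le_of_dominatesAt [Finite X] [Nonempty X] (hQ : Coherent Q)
    {M : List X → ℝ} (hM : IsSupermart Q M) {g : (ℕ → X) → EReal} {c : ℝ}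
    (hc : ∀ ω, (c : EReal) ≤ g ω) {s t : List X} (hdom : DominatesAt M g s) (hst : s <+: t) :
    c ≤ M t := by
  obtain ⟨ω, hωt, hle⟩ := hM.exists_path_le hQ t
  have := (hc ω).trans ((hdom.of_prefix hst) ω hωt)
  exact EReal.coe_le_coe_iff.1 (this.trans (pathLiminf_le_of_forall_le hle))

section UpperExpectation

variable {g g₁ g₂ : (ℕ → X) → EReal} {s : List X}

lemma EV_le {M : List X → ℝ} (hM : IsSupermart Q M) (hb : BddBelowProc M)
    (hdom : DominatesAt M g s) : EV Q g s ≤ M s :=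
  sInf_le ⟨M, hM, hb, hdom, rfl⟩

lemma exists_lt_of_EV_lt {y : EReal} (h : EV Q g s < y) :
    ∃ M, IsSupermart Q M ∧ BddBelowProc M ∧ DominatesAt M g s ∧ (M s : EReal) < y := by
  obtain ⟨_, ⟨M, hM, hb, hdom, rfl⟩, hy⟩ := sInf_lt_iff.1 h
  exact ⟨M, hM, hb, hdom, hy⟩

lemma EV_mono (hle : ∀ ω, g₁ ω ≤ g₂ ω) (s : List X) : EV Q g₁ s ≤ EV Q g₂ s :=
  sInf_le_sInf fun _ ⟨M, hM, hb, hdom, hy⟩ =>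
    ⟨M, hM, hb, fun ω hω => (hle ω).trans (hdom ω hω), hy⟩

lemma le_EV [Finite X] [Nonempty X] (hQ : Coherent Q) {c : ℝ} (hc : ∀ ω, (c : EReal) ≤ g ω)
    (s : List X) : (c : EReal) ≤ EV Q g s :=
  le_sInf fun _ ⟨_, hM, _, hdom, hy⟩ =>
    hy ▸ EReal.coe_le_coe_iff.2 (hM.le_of_dominatesAt hQ hc hdom (List.prefix_refl s))

lemma EV_ne_top (h : EV Q g [] ≠ ⊤) (s : List X) : EV Q g s ≠ ⊤ := by
  obtain ⟨M, hM, hb, hdom, -⟩ := exists_lt_of_EV_lt h.lt_top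
  exact ne_top_of_le_ne_top (EReal.coe_ne_top _)
    (EV_le hM hb fun ω _ => hdom ω (pref_zero ω))

end UpperExpectation

noncomputable def evProc (Q : List X → (X → ℝ) → ℝ) (g : (ℕ → X) → EReal) (s : List X) : ℝ :=
  (EV Q g s).toReal

section EvProc

variable [Finite X] [Nonempty X] {g : (ℕ → X) → EReal} {c : ℝ}

lemma coe_evProc (hQ : Coherent Q) (hc : ∀ ω, (c : EReal) ≤ g ω) (hfin : EV Q g [] ≠ ⊤)
    (s : List X) : (evProc Q g s : EReal) = EV Q g s :=
  EReal.coe_toReal (EV_ne_top hfin s) (ne_bot_of_le_ne_bot (EReal.coe_ne_bot c) (le_EV hQ hc s))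

lemma le_evProc (hQ : Coherent Q) (hc : ∀ ω, (c : EReal) ≤ g ω) (hfin : EV Q g [] ≠ ⊤)
    (s : List X) : c ≤ evProc Q g s :=
  EReal.coe_le_coe_iff.1 (coe_evProc hQ hc hfin s ▸ le_EV hQ hc s)

lemma evProc_le (hQ : Coherent Q) (hc : ∀ ω, (c : EReal) ≤ g ω) (hfin : EV Q g [] ≠ ⊤)
    {M : List X → ℝ} (hM : IsSupermart Q M) (hb : BddBelowProc M) {s : List X}
    (hdom : DominatesAt M g s) : evProc Q g s ≤ M s :=
  EReal.coe_le_coe_iff.1 (coe_evProc hQ hc hfin s ▸ EV_le hM hb hdom)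

lemma exists_lt_evProc_add (hQ : Coherent Q) (hc : ∀ ω, (c : EReal) ≤ g ω)
    (hfin : EV Q g [] ≠ ⊤) (s : List X) {θ : ℝ} (hθ : 0 < θ) :
    ∃ M, IsSupermart Q M ∧ BddBelowProc M ∧ DominatesAt M g s ∧ M s < evProc Q g s + θ := by
  have hlt : EV Q g s < ((evProc Q g s + θ : ℝ) : EReal) := by
    rw [← coe_evProc hQ hc hfin s]
    exact EReal.coe_lt_coe_iff.2 (by linarith)
  obtain ⟨M, hM, hb, hdom, hMs⟩ := exists_lt_of_EV_lt hlt
  exact ⟨M, hM, hb, hdom, EReal.coe_lt_coe_iff.1 hMs⟩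

lemma evProc_mono (hQ : Coherent Q) {g₁ g₂ : (ℕ → X) → EReal} (hc : ∀ ω, (c : EReal) ≤ g₁ ω)
    (hfin : EV Q g₂ [] ≠ ⊤) (hle : ∀ ω, g₁ ω ≤ g₂ ω) (s : List X) :
    evProc Q g₁ s ≤ evProc Q g₂ s :=
  EReal.toReal_le_toReal (EV_mono hle s)
    (ne_bot_of_le_ne_bot (EReal.coe_ne_bot c) (le_EV hQ hc s)) (EV_ne_top hfin s)

lemma isSupermart_evProc (hQ : Coherent Q) (hc : ∀ ω, (c : EReal) ≤ g ω)
    (hfin : EV Q g [] ≠ ⊤) : IsSupermart Q (evProc Q g) := by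
  intro s
  refine le_of_forall_pos_le_add fun ε hε => ?_
  obtain ⟨M, hM, hb, hdom, hMs⟩ := exists_lt_evProc_add hQ hc hfin s hε
  have hchild (x : X) : evProc Q g (s ++ [x]) ≤ M (s ++ [x]) :=
    evProc_le hQ hc hfin hM hb (hdom.of_prefix (List.prefix_append s [x]))
  have := hQ.apply_le_apply_add s (h := pdiff (evProc Q g) s) (g := pdiff M s)
    (c := M s - evProc Q g s) fun x => by simp only [pdiff]; linarith [hchild x]
  linarith [hM s]

end EvProc

section Relay

variable (A : List X → List X → ℝ) (trig : List X → Prop) (q : ℝ)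

open Classical in
/-- One move of the relay strategy. Its state is either cash `.inl c` or `.inr (b, u)`: `u` units
of the process `A b`, bought at node `b`. Cash is invested entirely in `A s` at the first node `s`
with `trig s`; the units are sold once they are worth `q` each. -/
noncomputable def relayStep : ℝ ⊕ (List X × ℝ) → List X → ℝ ⊕ (List X × ℝ)
  | .inl c, s => if trig s then .inr (s, c / A s s) else .inl c
  | .inr (b, u), s => if q ≤ A b s then .inl (u * A b s) else .inr (b, u)

noncomputable def relayState (s : List X) : ℝ ⊕ (List X × ℝ) :=
  s.reverseRecOn (.inl 1) fun l _ st => relayStep A trig q st l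

def relayValue (s : List X) : ℝ ⊕ (List X × ℝ) → ℝ
  | .inl c => c
  | .inr (b, u) => u * A b s

noncomputable def relayCapital (s : List X) : ℝ := relayValue A s (relayState A trig q s)

/-- The price paid for the current position: unlike the capital it never decreases, so it records
the gains of the completed sales. -/
def relayStake : ℝ ⊕ (List X × ℝ) → ℝ
  | .inl c => c
  | .inr (b, u) => u * A b b

def RelayInv (p : ℝ) (s : List X) : ℝ ⊕ (List X × ℝ) → Prop
  | .inl c => 0 ≤ c
  | .inr (b, u) => 0 ≤ u ∧ A b b ≤ p ∧ b <+: s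

lemma relayState_nil : relayState A trig q [] = .inl 1 := by
  unfold relayState; exact List.reverseRecOn_nil _ _

lemma relayState_append_singleton (s : List X) (x : X) :
    relayState A trig q (s ++ [x]) = relayStep A trig q (relayState A trig q s) s := by
  unfold relayState; exact List.reverseRecOn_concat _ _ _ _

variable {A trig q} {p : ℝ}

lemma relayInv_relayState (hA1 : ∀ b t, b <+: t → 1 ≤ A b t) (hAp : ∀ b, trig b → A b b ≤ p)
    (s : List X) : RelayInv A p s (relayState A trig q s) := by
  induction s using List.reverseRecOn with
  | nil => rw [relayState_nil]; exact zero_le_one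
  | append_singleton s x ih =>
    rw [relayState_append_singleton]
    rcases hst : relayState A trig q s with c | ⟨b, u⟩ <;> rw [hst] at ih
    · by_cases ht : trig s
      · simp only [relayStep, if_pos ht, RelayInv]
        exact ⟨div_nonneg ih (by linarith [hA1 s s (List.prefix_refl s)]), hAp s ht,
          List.prefix_append _ _⟩
      · simpa [relayStep, ht, RelayInv] using ih
    · obtain ⟨hu, hbp, hbs⟩ := ih
      by_cases hsell : q ≤ A b s
      · simp only [relayStep, if_pos hsell, RelayInv]
        exact mul_nonneg hu (by linarith [hA1 b s hbs])
      · simp only [relayStep, if_neg hsell, RelayInv]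
        exact ⟨hu, hbp, hbs.trans (List.prefix_append _ _)⟩

lemma isSupermart_relayCapital [Nonempty X] (hQ : Coherent Q) (hA : ∀ b, IsSupermart Q (A b))
    (hA1 : ∀ b t, b <+: t → 1 ≤ A b t) (hAp : ∀ b, trig b → A b b ≤ p) :
    IsSupermart Q (relayCapital A trig q) := by
  intro s
  have hinv := relayInv_relayState hA1 hAp (q := q) s
  have hchild := relayState_append_singleton A trig q s
  rcases hst : relayState A trig q s with c | ⟨b, u⟩ <;> rw [hst] at hinv hchild
  · by_cases ht : trig s
    · have hAs : 0 < A s s := by linarith [hA1 s s (List.prefix_refl s)]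
      have hu : 0 ≤ c / A s s := div_nonneg hinv hAs.le
      have hdiff : pdiff (relayCapital A trig q) s = fun x => c / A s s * pdiff (A s) s x := by
        funext x
        simp only [pdiff, relayCapital, hchild, hst, relayStep, if_pos ht, relayValue]
        field_simp
      rw [hdiff, hQ.apply_const_mul s _ hu]
      exact mul_nonpos_of_nonneg_of_nonpos hu (hA s s)
    · have hdiff : pdiff (relayCapital A trig q) s = 0 := by
        funext x
        simp [pdiff, relayCapital, hchild, hst, relayStep, ht, relayValue]
      rw [hdiff, hQ.apply_zero]
  · obtain ⟨hu, -, -⟩ := hinv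
    by_cases hsell : q ≤ A b s
    · have hdiff : pdiff (relayCapital A trig q) s = 0 := by
        funext x
        simp [pdiff, relayCapital, hchild, hst, relayStep, hsell, relayValue]
      rw [hdiff, hQ.apply_zero]
    · have hdiff : pdiff (relayCapital A trig q) s = fun x => u * pdiff (A b) s x := by
        funext x
        simp only [pdiff, relayCapital, hchild, hst, relayStep, if_neg hsell, relayValue]
        ring
      rw [hdiff, hQ.apply_const_mul s _ hu]
      exact mul_nonpos_of_nonneg_of_nonpos hu (hA b s)

lemma relayCapital_nil : relayCapital A trig q [] = 1 := by
  simp [relayCapital, relayState_nil, relayValue]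

lemma relayStake_div_le_relayCapital (hA1 : ∀ b t, b <+: t → 1 ≤ A b t)
    (hAp : ∀ b, trig b → A b b ≤ p) (hp : 1 ≤ p) (s : List X) :
    relayStake A (relayState A trig q s) / p ≤ relayCapital A trig q s := by
  have hinv := relayInv_relayState hA1 hAp (q := q) s
  rw [relayCapital]
  rcases hst : relayState A trig q s with c | ⟨b, u⟩ <;> rw [hst] at hinv
  · exact div_le_self (α := ℝ) hinv hp
  · obtain ⟨hu, hbp, hbs⟩ := hinv
    rw [relayStake, relayValue, div_le_iff₀ (by linarith)]
    nlinarith [mul_le_mul_of_nonneg_left hbp hu,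
      mul_nonneg (mul_nonneg hu (by linarith : (0 : ℝ) ≤ p)) (sub_nonneg.2 (hA1 b s hbs))]

lemma relayCapital_nonneg (hA1 : ∀ b t, b <+: t → 1 ≤ A b t)
    (hAp : ∀ b, trig b → A b b ≤ p) (s : List X) : 0 ≤ relayCapital A trig q s := by
  have hinv := relayInv_relayState hA1 hAp (q := q) s
  rw [relayCapital]
  rcases hst : relayState A trig q s with c | ⟨b, u⟩ <;> rw [hst] at hinv
  · exact hinv
  · exact mul_nonneg hinv.1 (by linarith [hA1 b s hinv.2.2])

lemma relayStake_le_relayStep (hA1 : ∀ b t, b <+: t → 1 ≤ A b t)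
    (hAp : ∀ b, trig b → A b b ≤ p) (hpq : p ≤ q) (s : List X) :
    relayStake A (relayState A trig q s)
      ≤ relayStake A (relayStep A trig q (relayState A trig q s) s) := by
  have hinv := relayInv_relayState hA1 hAp (q := q) s
  rcases hst : relayState A trig q s with c | ⟨b, u⟩ <;> rw [hst] at hinv
  · by_cases ht : trig s
    · have hAs : 0 < A s s := by linarith [hA1 s s (List.prefix_refl s)]
      simp only [relayStep, if_pos ht, relayStake]
      rw [div_mul_cancel₀ c hAs.ne']
    · simp [relayStep, ht, relayStake]
  · obtain ⟨hu, hbp, -⟩ := hinv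
    by_cases hsell : q ≤ A b s
    · simp only [relayStep, if_pos hsell, relayStake]
      exact mul_le_mul_of_nonneg_left (by linarith) hu
    · simp [relayStep, hsell, relayStake]

lemma relayStake_relayStep_of_sell (hA1 : ∀ b t, b <+: t → 1 ≤ A b t)
    (hAp : ∀ b, trig b → A b b ≤ p) (hp : 1 ≤ p) (hpq : p ≤ q) {s b : List X} {u : ℝ}
    (hst : relayState A trig q s = .inr (b, u)) (hsell : q ≤ A b s) :
    q / p * relayStake A (relayState A trig q s)
      ≤ relayStake A (relayStep A trig q (relayState A trig q s) s) := by
  have hinv := relayInv_relayState hA1 hAp (q := q) s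
  rw [hst] at hinv ⊢
  obtain ⟨hu, hbp, -⟩ := hinv
  simp only [relayStep, if_pos hsell, relayStake]
  have hq : 0 ≤ q := by linarith
  calc q / p * (u * A b b) ≤ q / p * (u * p) := by gcongr
    _ = u * q := by field_simp
    _ ≤ u * A b s := mul_le_mul_of_nonneg_left hsell hu

lemma exists_relayState_sell (hA1 : ∀ b t, b <+: t → 1 ≤ A b t)
    (hAp : ∀ b, trig b → A b b ≤ p) {ω : ℕ → X} (htrig : ∃ᶠ n in atTop, trig (pref ω n))
    (hpay : ∀ m, ∀ᶠ n in atTop, q ≤ A (pref ω m) (pref ω n)) (n : ℕ) :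
    ∃ m ≥ n, ∃ b u, relayState A trig q (pref ω m) = .inr (b, u) ∧ q ≤ A b (pref ω m) := by
  have hstep (k : ℕ) : relayState A trig q (pref ω (k + 1))
      = relayStep A trig q (relayState A trig q (pref ω k)) (pref ω k) := by
    rw [pref_succ, relayState_append_singleton]
  have hhold : ∃ k ≥ n, ∃ b u, relayState A trig q (pref ω k) = .inr (b, u) := by
    obtain ⟨k, hk, htk⟩ := frequently_atTop.1 htrig n
    rcases hst : relayState A trig q (pref ω k) with c | ⟨b, u⟩
    · exact ⟨k + 1, by omega, pref ω k, c / A (pref ω k) (pref ω k), by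
        rw [hstep, hst]; simp [relayStep, htk]⟩
    · exact ⟨k, hk, b, u, hst⟩
  obtain ⟨k, hk, b, u, hkbu⟩ := hhold
  have hb : pref ω b.length = b := by
    have hinv := relayInv_relayState hA1 hAp (q := q) (pref ω k)
    rw [hkbu] at hinv
    exact pref_length_eq_of_prefix hinv.2.2
  obtain ⟨T, hT⟩ := eventually_atTop.1 (hb ▸ hpay b.length)
  by_contra! hno
  have hpersist (j : ℕ) : relayState A trig q (pref ω (k + j)) = .inr (b, u) := by
    induction j with
    | zero => exact hkbu
    | succ j ih =>
      rw [← add_assoc, hstep, ih]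
      simp [relayStep, not_le.2 (hno (k + j) (by omega) b u ih)]
  exact (hno (k + T) (by omega) b u (hpersist T)).not_ge (hT (k + T) (by omega))

lemma tendsto_relayCapital (hA1 : ∀ b t, b <+: t → 1 ≤ A b t)
    (hAp : ∀ b, trig b → A b b ≤ p) (hp : 1 ≤ p) (hpq : p < q) {ω : ℕ → X}
    (htrig : ∃ᶠ n in atTop, trig (pref ω n))
    (hpay : ∀ m, ∀ᶠ n in atTop, q ≤ A (pref ω m) (pref ω n)) :
    Tendsto (fun n => relayCapital A trig q (pref ω n)) atTop atTop := by
  set φ : ℕ → ℝ := fun n => relayStake A (relayState A trig q (pref ω n)) with hφ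
  have hstep (n : ℕ) : φ (n + 1)
      = relayStake A (relayStep A trig q (relayState A trig q (pref ω n)) (pref ω n)) := by
    simp only [hφ, pref_succ, relayState_append_singleton]
  have hφ_mono : Monotone φ := monotone_nat_of_le_succ fun n =>
    (hstep n).symm ▸ relayStake_le_relayStep hA1 hAp hpq.le _
  have hφ_pow (i : ℕ) : ∃ n, (q / p) ^ i ≤ φ n := by
    induction i with
    | zero => exact ⟨0, by simp [hφ, pref_zero, relayState_nil, relayStake]⟩
    | succ i ih =>
      obtain ⟨n, hn⟩ := ih
      obtain ⟨m, hm, b, u, hhold, hsell⟩ := exists_relayState_sell hA1 hAp htrig hpay n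
      refine ⟨m + 1, ?_⟩
      calc (q / p) ^ (i + 1) = q / p * (q / p) ^ i := pow_succ' _ _
        _ ≤ q / p * φ m :=
          mul_le_mul_of_nonneg_left (hn.trans (hφ_mono hm)) (div_pos (by linarith) (by linarith)).le
        _ ≤ φ (m + 1) := (hstep m).symm ▸ relayStake_relayStep_of_sell hA1 hAp hp hpq.le hhold hsell
  have hφ_top : Tendsto φ atTop atTop := by
    refine tendsto_atTop_atTop_of_monotone hφ_mono fun r => ?_
    obtain ⟨i, hi⟩ := pow_unbounded_of_one_lt r ((one_lt_div (by linarith)).2 hpq)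
    obtain ⟨n, hn⟩ := hφ_pow i
    exact ⟨n, hi.le.trans hn⟩
  exact tendsto_atTop_mono (relayStake_div_le_relayCapital hA1 hAp hp <| pref ω ·)
    (hφ_top.atTop_div_const (by linarith))

end Relay

lemma exists_testSupermart_tendsto_of_pathLiminf_lt [Finite X] [Nonempty X] (hQ : Coherent Q)
    {g : (ℕ → X) → EReal} {c : ℝ} (hc : ∀ ω, (c : EReal) ≤ g ω) (hfin : EV Q g [] ≠ ⊤)
    {α β : ℝ} (hcα : c < α) (hαβ : α < β) :
    ∃ M, IsTestSupermart Q M ∧ ∀ ω, pathLiminf (evProc Q g) ω < α → (β : EReal) < g ω →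
      Tendsto (fun n => M (pref ω n)) atTop atTop := by
  have hθ : 0 < (β - α) / 2 := by linarith
  choose W hW _ hWdom hWlt using fun b => exists_lt_evProc_add hQ hc hfin b hθ
  -- `A b` is a near-optimal bound for `g` on the paths through `b`, shifted to be `≥ 1` after `b`
  set A : List X → List X → ℝ := fun b t => W b t + (1 - c)
  have hA (b : List X) : IsSupermart Q (A b) := (hW b).add hQ (.const hQ _)
  have hA1 (b t : List X) (hbt : b <+: t) : 1 ≤ A b t := by
    linarith [(hW b).le_of_dominatesAt hQ hc (hWdom b) hbt]
  have hAp (b : List X) (hb : evProc Q g b < α) : A b b ≤ α + (β - α) / 2 + (1 - c) := by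
    linarith [hWlt b]
  refine ⟨relayCapital A (evProc Q g · < α) (β + (1 - c)),
    ⟨isSupermart_relayCapital hQ hA hA1 hAp, relayCapital_nonneg hA1 hAp, relayCapital_nil⟩,
    fun ω hlim hβ => tendsto_relayCapital hA1 hAp (by linarith) (by linarith) ?_ fun m => ?_⟩
  · exact (frequently_lt_of_liminf_lt (by isBoundedDefault) hlim).mono
      fun n hn => EReal.coe_lt_coe_iff.1 hn
  · have hdom := hWdom (pref ω m) ω (by rw [length_pref])
    filter_upwards [eventually_lt_of_lt_liminf (hβ.trans_le hdom) (by isBoundedDefault)]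
      with n hn
    linarith [EReal.coe_lt_coe_iff.1 hn]

lemma exists_supermart_ge_mul_of_testSupermart [Finite X] [Nonempty X] (hQ : Coherent Q)
    (C : ℕ → List X → ℝ) (hC : ∀ i, IsTestSupermart Q (C i)) :
    ∃ J, IsSupermart Q J ∧ (∀ s, 0 ≤ J s) ∧ J [] ≤ 1 ∧ ∀ i, ∃ l > 0, ∀ s, l * C i s ≤ J s := by
  obtain ⟨e, he⟩ := exists_surjective_nat (List X)
  -- the weight of `C i` is small against its values at the first `i + 1` nodes `e j`
  set m : ℕ → ℝ := fun i => 1 + ∑ j ∈ Finset.range (i + 1), C i (e j)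
  have hm (i : ℕ) : 1 ≤ m i :=
    le_add_of_nonneg_right (Finset.sum_nonneg fun j _ => (hC i).2.1 _)
  set w : ℕ → ℝ := fun i => 1 / 2 / 2 ^ i / m i
  have hw (i : ℕ) : 0 < w i := by have := hm i; positivity
  have hterm (i : ℕ) (s : List X) : 0 ≤ w i * C i s := mul_nonneg (hw i).le ((hC i).2.1 s)
  have hsummable (s : List X) : Summable fun i => w i * C i s := by
    obtain ⟨j, rfl⟩ := he s
    refine (summable_geometric_two' 1).of_norm_bounded_eventually_nat ?_
    filter_upwards [eventually_ge_atTop j] with i hij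
    have hCm : C i (e j) ≤ m i := by
      have := Finset.single_le_sum (fun k _ => (hC i).2.1 (e k))
        (Finset.mem_range.2 (Nat.lt_succ_of_le hij))
      linarith
    rw [Real.norm_of_nonneg (hterm i _)]
    calc w i * C i (e j) ≤ w i * m i := mul_le_mul_of_nonneg_left hCm (hw i).le
      _ = 1 / 2 / 2 ^ i := div_mul_cancel₀ _ (by linarith [hm i])
  refine ⟨fun s => ∑' i, w i * C i s, ?_, fun s => tsum_nonneg (hterm · s), ?_,
    fun i => ⟨w i, hw i, fun s => (hsummable s).le_tsum i fun j _ => hterm j s⟩⟩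
  · exact .of_tendsto hQ
      (fun N => .sum hQ (Finset.range N) fun i => (hC i).1.const_mul hQ (hw i).le)
      fun s => (hsummable s).hasSum.tendsto_sum_nat
  · calc ∑' i, w i * C i [] ≤ ∑' i : ℕ, 1 / 2 / 2 ^ i := by
          refine (hsummable []).tsum_le_tsum (fun i => ?_) (summable_geometric_two' 1)
          rw [(hC i).2.2, mul_one]
          exact div_le_self (by positivity) (hm i)
      _ = 1 := tsum_geometric_two' 1

lemma exists_supermart_tendsto_of_pathLiminf_lt [Finite X] [Nonempty X] (hQ : Coherent Q)
    {g : ℕ → (ℕ → X) → EReal} {c : ℝ} (hc : ∀ k ω, (c : EReal) ≤ g k ω)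
    (hfin : ∀ k, EV Q (g k) [] ≠ ⊤) :
    ∃ J, IsSupermart Q J ∧ (∀ s, 0 ≤ J s) ∧ J [] ≤ 1 ∧ ∀ k ω,
      pathLiminf (evProc Q (g k)) ω < g k ω → Tendsto (fun n => J (pref ω n)) atTop atTop := by
  have hins (k : ℕ) (a b : ℚ) : ∃ M, IsTestSupermart Q M ∧ ∀ ω, c < a → (a : ℝ) < b →
      pathLiminf (evProc Q (g k)) ω < (a : ℝ) → ((b : ℝ) : EReal) < g k ω →
      Tendsto (fun n => M (pref ω n)) atTop atTop := by
    by_cases hab : c < a ∧ (a : ℝ) < b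
    · obtain ⟨M, hM, hMt⟩ :=
        exists_testSupermart_tendsto_of_pathLiminf_lt hQ (hc k) (hfin k) hab.1 hab.2
      exact ⟨M, hM, fun ω _ _ => hMt ω⟩
    · exact ⟨fun _ => 1, ⟨.const hQ 1, fun _ => zero_le_one, rfl⟩,
        fun ω hca hab' => absurd ⟨hca, hab'⟩ hab⟩
  choose M hM hMt using hins
  obtain ⟨e, he⟩ := exists_surjective_nat (ℕ × ℚ × ℚ)
  obtain ⟨J, hJ, hJ0, hJnil, hJM⟩ := exists_supermart_ge_mul_of_testSupermart hQ
    (fun i => M (e i).1 (e i).2.1 (e i).2.2) fun i => hM _ _ _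
  refine ⟨J, hJ, hJ0, hJnil, fun k ω hlt => ?_⟩
  obtain ⟨a, hVa, hag⟩ := EReal.exists_rat_btwn_of_lt hlt
  obtain ⟨b, hab, hbg⟩ := EReal.exists_rat_btwn_of_lt hag
  have hca : c < (a : ℝ) := EReal.coe_lt_coe_iff.1
    ((le_pathLiminf (le_evProc hQ (hc k) (hfin k)) ω).trans_lt hVa)
  obtain ⟨i, hi⟩ := he (k, a, b)
  obtain ⟨l, hl, hlJ⟩ := hJM i
  simp only [hi] at hlJ
  exact tendsto_atTop_mono (fun n => hlJ _)
    ((hMt k a b ω hca (EReal.coe_lt_coe_iff.1 hab) hVa hbg).const_mul_atTop hl)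

lemma iSup_le_pathLiminf {g : ℕ → (ℕ → X) → EReal} {V : ℕ → List X → ℝ} {T : List X → ℝ}
    (hVT : ∀ k s, V k s ≤ T s)
    (hT : ∀ k ω, pathLiminf (V k) ω < g k ω → Tendsto (fun n => T (pref ω n)) atTop atTop)
    (ω : ℕ → X) : (⨆ k, g k) ω ≤ pathLiminf T ω := by
  by_cases hbad : ∃ k, pathLiminf (V k) ω < g k ω
  · obtain ⟨k, hk⟩ := hbad
    rw [pathLiminf_eq_top (hT k ω hk)]
    exact le_top
  · simp only [not_exists, not_lt] at hbad
    rw [iSup_apply]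
    exact iSup_le fun k => (hbad k).trans (pathLiminf_mono (hVT k) ω)

lemma EV_ne_top_of_iSup {g : ℕ → (ℕ → X) → EReal} (hfin : EV Q (⨆ k, g k) [] ≠ ⊤) (k : ℕ) :
    EV Q (g k) [] ≠ ⊤ :=
  ne_top_of_le_ne_top hfin <| EV_mono (fun ω => by rw [iSup_apply]; exact le_iSup (g · ω) k) []

section Upward

variable [Finite X] [Nonempty X] {g : ℕ → (ℕ → X) → EReal} {c : ℝ}

lemma monotone_evProc (hQ : Coherent Q) (hmono : Monotone g) (hc : ∀ k ω, (c : EReal) ≤ g k ω)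
    (hfin : EV Q (⨆ k, g k) [] ≠ ⊤) (s : List X) : Monotone fun k => evProc Q (g k) s :=
  fun k l hkl => evProc_mono hQ (hc k) (EV_ne_top_of_iSup hfin l) (fun ω => hmono hkl ω) s

lemma evProc_le_evProc_iSup (hQ : Coherent Q) (hc : ∀ k ω, (c : EReal) ≤ g k ω)
    (hfin : EV Q (⨆ k, g k) [] ≠ ⊤) (k : ℕ) (s : List X) :
    evProc Q (g k) s ≤ evProc Q (⨆ k, g k) s :=
  evProc_mono hQ (hc k) hfin (fun ω => by rw [iSup_apply]; exact le_iSup (g · ω) k) s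

theorem EV_iSup_le_iSup_EV (hQ : Coherent Q) (hmono : Monotone g)
    (hc : ∀ k ω, (c : EReal) ≤ g k ω) (hfin : EV Q (⨆ k, g k) [] ≠ ⊤) :
    EV Q (⨆ k, g k) [] ≤ ⨆ k, EV Q (g k) [] := by
  have hfin_k := EV_ne_top_of_iSup hfin
  set S : List X → ℝ := fun s => ⨆ k, evProc Q (g k) s
  have hbdd (s : List X) : BddAbove (Set.range fun k => evProc Q (g k) s) :=
    ⟨_, Set.forall_mem_range.2 fun k => evProc_le_evProc_iSup hQ hc hfin k s⟩
  have htend (s : List X) : Tendsto (fun k => evProc Q (g k) s) atTop (𝓝 (S s)) :=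
    tendsto_atTop_ciSup (monotone_evProc hQ hmono hc hfin s) (hbdd s)
  have hS : IsSupermart Q S :=
    .of_tendsto hQ (fun k => isSupermart_evProc hQ (hc k) (hfin_k k)) htend
  have hVS (k : ℕ) (s : List X) : evProc Q (g k) s ≤ S s := le_ciSup (hbdd s) k
  have hSc (s : List X) : c ≤ S s := (le_evProc hQ (hc 0) (hfin_k 0) s).trans (hVS 0 s)
  have hSnil : (S [] : EReal) ≤ ⨆ k, EV Q (g k) [] :=
    le_of_tendsto' (EReal.tendsto_coe.2 (htend [])) fun k =>
      (coe_evProc hQ (hc k) (hfin_k k) []).trans_le (le_iSup (fun k => EV Q (g k) []) k)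
  obtain ⟨J, hJ, hJ0, hJnil, hJt⟩ := exists_supermart_tendsto_of_pathLiminf_lt hQ hc hfin_k
  -- adding `ε * J` makes `S` blow up on the paths where some `evProc Q (g k)` falls short of `g k`
  have hEV_le (ε : ℝ) (hε : 0 < ε) : EV Q (⨆ k, g k) [] ≤ ((S [] + ε : ℝ) : EReal) := by
    have hST (s : List X) : S s ≤ S s + ε * J s := le_add_of_nonneg_right (mul_nonneg hε.le (hJ0 s))
    have hdom := iSup_le_pathLiminf (g := g) (fun k s => (hVS k s).trans (hST s)) fun k ω hk =>
      tendsto_atTop_mono (fun n => add_le_add_left (hSc _) _)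
        (tendsto_atTop_add_const_left _ c ((hJt k ω hk).const_mul_atTop hε))
    refine (EV_le (hS.add hQ (hJ.const_mul hQ hε.le)) ⟨c, fun s => (hSc s).trans (hST s)⟩
      fun ω _ => hdom ω).trans (EReal.coe_le_coe_iff.2 ?_)
    show S [] + ε * J [] ≤ S [] + ε
    linarith [mul_le_of_le_one_right hε.le hJnil]
  refine (EReal.le_of_forall_lt_iff_le.1 fun z hz => ?_).trans hSnil
  simpa using hEV_le (z - S []) (by linarith [EReal.coe_lt_coe_iff.1 hz])

end Upward

end

theorem game_theoretic_fatou {X : Type*} [Fintype X] [Nonempty X]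
    (Q : List X → (X → ℝ) → ℝ) (hQ : Coherent Q)
    (F : ℕ → (ℕ → X) → EReal)
    (hbdd : ∃ M : ℝ, ∀ n ω, (M : EReal) ≤ F n ω)
    (f : (ℕ → X) → EReal)
    (hf : f = fun ω => Filter.liminf (fun n => F n ω) Filter.atTop)
    (hfin : EV Q f [] < ⊤) :
    EV Q f [] ≤ Filter.liminf (fun n => EV Q (F n) []) Filter.atTop := by
  obtain ⟨C, hC⟩ := hbdd
  set g : ℕ → (ℕ → X) → EReal := fun k ω => ⨅ n ≥ k, F n ω
  have hfg : f = ⨆ k, g k := by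
    funext ω
    rw [hf, iSup_apply]
    exact liminf_eq_iSup_iInf_of_nat
  have hmono : Monotone g := fun k l hkl ω => biInf_mono fun n hn => hkl.trans hn
  rw [hfg] at hfin ⊢
  calc EV Q (⨆ k, g k) [] ≤ ⨆ k, EV Q (g k) [] :=
        EV_iSup_le_iSup_EV hQ hmono (fun k ω => le_iInf₂ fun n _ => hC n ω) hfin.ne
    _ ≤ liminf (fun n => EV Q (F n) []) atTop := by
      rw [liminf_eq_iSup_iInf_of_nat]
      exact iSup_mono fun k => le_iInf₂ fun n hn => EV_mono (fun ω => iInf₂_le n hn) []
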